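/- (Smoothed analysis) For any ε ∈ (0,1), let G be the mixture distribution that with probability 1−ε is a point mass at 1 and with probability ε is uniform on [0,2]. Then G satisfies G(c/2) ≥ (ε/(2(2−ε)))·G(c) for all c > 0, i.e., G is (1/2, ε/(2(2−ε)), 0)-slowly-increasing; consequently the best linear contract achieves a 4(2−ε)/ε-approximation to the optimal welfare for any principal-agent instance with type distribution G. -/

import Mathlib

/-! The welfare `W c = max_j (R j - γ j * c)` is continuous, antitone and nonnegative, and an
agent of cost `c` facing the linear contract `α` picks an action of reward at least `W (c / α)`.
Every superlevel set of `W` is a closed lower set, so by the layer-cake formula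
`β * E[W c] ≤ E[W (c / α)]` follows from `β * μ (Iic a) ≤ μ (Iic (α * a))`. For the smoothed point
mass this holds with `α = 1/2` and `β = ε / (2 (2 - ε))`, whence the factor
`1 / ((1 - α) β) = 4 (2 - ε) / ε`. -/

open MeasureTheory Set

section Welfare

variable {ι : Type*} [Fintype ι] [Nonempty ι] {R γ : ι → ℝ}

def welfare (R γ : ι → ℝ) (c : ℝ) : ℝ :=
  Finset.univ.sup' Finset.univ_nonempty fun j => R j - γ j * c

lemma le_welfare (j : ι) (c : ℝ) : R j - γ j * c ≤ welfare R γ c :=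
  Finset.le_sup' (fun j => R j - γ j * c) (Finset.mem_univ j)

lemma welfare_le_iff {c a : ℝ} : welfare R γ c ≤ a ↔ ∀ j, R j - γ j * c ≤ a := by
  simp [welfare]

lemma welfare_eq_of_forall_le {i : ι} {c : ℝ} (h : ∀ j, R j - γ j * c ≤ R i - γ i * c) :
    welfare R γ c = R i - γ i * c :=
  le_antisymm (welfare_le_iff.2 h) (le_welfare i c)

lemma continuous_welfare : Continuous (welfare R γ) :=
  Continuous.finset_sup'_apply _ fun _ _ => by fun_prop

lemma antitone_welfare (hγ : 0 ≤ γ) : Antitone (welfare R γ) := fun _ _ hcd =>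
  welfare_le_iff.2 fun j =>
    (sub_le_sub_left (mul_le_mul_of_nonneg_left hcd (hγ j)) _).trans (le_welfare j _)

lemma welfare_nonneg {i₀ : ι} (hR₀ : R i₀ = 0) (hγ₀ : γ i₀ = 0) (c : ℝ) : 0 ≤ welfare R γ c := by
  simpa [hR₀, hγ₀] using le_welfare (R := R) (γ := γ) i₀ c

lemma welfare_div_le_of_isBestResponse {α c : ℝ} {i : ι} (hα : 0 < α) (hγ : 0 ≤ γ) (hc : 0 ≤ c)
    (h : ∀ j, α * R j - γ j * c ≤ α * R i - γ i * c) : welfare R γ (c / α) ≤ R i :=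
  welfare_le_iff.2 fun j =>
    calc R j - γ j * (c / α) = (α * R j - γ j * c) / α := by field_simp
      _ ≤ (α * R i - γ i * c) / α := div_le_div_of_nonneg_right (h j) hα.le
      _ = R i - γ i * (c / α) := by field_simp
      _ ≤ R i := sub_le_self _ (mul_nonneg (hγ i) (div_nonneg hc hα.le))

end Welfare

lemma IsLowerSet.eq_empty_or_eq_univ_or_eq_Iic {α : Type*} [ConditionallyCompleteLinearOrder α]
    [TopologicalSpace α] [OrderTopology α] {s : Set α} (hs : IsLowerSet s) (hc : IsClosed s) :
    s = ∅ ∨ s = univ ∨ ∃ a, s = Iic a := by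
  rcases s.eq_empty_or_nonempty with h | hne
  · exact Or.inl h
  by_cases hb : BddAbove s
  · refine Or.inr (Or.inr ⟨sSup s, Subset.antisymm (fun x hx => le_csSup hb hx) fun x hx => ?_⟩)
    exact hs hx (hc.csSup_mem hne hb)
  · refine Or.inr (Or.inl (eq_univ_of_forall fun x => ?_))
    obtain ⟨y, hy, hxy⟩ := not_bddAbove_iff.1 hb x
    exact hs hxy.le hy

lemma ae_nonneg_of_measure_Iio_zero {μ : Measure ℝ} (hμ : μ (Iio 0) = 0) : ∀ᵐ c ∂μ, 0 ≤ c :=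
  (measure_eq_zero_iff_ae_notMem.1 hμ).mono fun _ hc => not_lt.1 hc

lemma mul_integral_le_integral_of_mul_meas_le {Ω : Type*} [MeasurableSpace Ω] {μ : Measure Ω}
    {f g : Ω → ℝ} {β : ℝ} (hβ : 0 ≤ β) (hf : 0 ≤ᵐ[μ] f) (hfm : AEMeasurable f μ)
    (hg : 0 ≤ᵐ[μ] g) (hgi : Integrable g μ)
    (h : ∀ t > 0, ENNReal.ofReal β * μ {ω | t ≤ f ω} ≤ μ {ω | t ≤ g ω}) :
    β * ∫ ω, f ω ∂μ ≤ ∫ ω, g ω ∂μ := by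
  rw [integral_eq_lintegral_of_nonneg_ae hf hfm.aestronglyMeasurable,
    integral_eq_lintegral_of_nonneg_ae hg hgi.aestronglyMeasurable,
    ← ENNReal.toReal_ofReal hβ, ← ENNReal.toReal_mul]
  refine ENNReal.toReal_mono (hgi.lintegral_lt_top.ne) ?_
  rw [lintegral_eq_lintegral_meas_le μ hf hfm, lintegral_eq_lintegral_meas_le μ hg hgi.aemeasurable,
    ← lintegral_const_mul' _ _ ENNReal.ofReal_ne_top]
  exact setLIntegral_mono' measurableSet_Ioi h

section SlowIncrease

variable {μ : Measure ℝ} {α β : ℝ}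

lemma measure_preimage_div_ge_of_isLowerSet (hα : 0 < α) (hβ : β ≤ 1)
    (hμ : μ (Iio 0) = 0) (hslow : ∀ c > 0, ENNReal.ofReal β * μ (Iic c) ≤ μ (Iic (α * c)))
    {s : Set ℝ} (hs : IsLowerSet s) (hc : IsClosed s) :
    ENNReal.ofReal β * μ s ≤ μ ((· / α) ⁻¹' s) := by
  have hβ' : ENNReal.ofReal β ≤ 1 := ENNReal.ofReal_le_one.2 hβ
  rcases hs.eq_empty_or_eq_univ_or_eq_Iic hc with rfl | rfl | ⟨a, rfl⟩
  · simp
  · simpa using mul_le_of_le_one_left' hβ'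
  have hpre : (· / α) ⁻¹' Iic a = Iic (α * a) := by
    ext x; simp [div_le_iff₀ hα, mul_comm]
  rw [hpre]
  rcases lt_trichotomy a 0 with ha | rfl | ha
  · simp [measure_mono_null (Iic_subset_Iio.2 ha) hμ]
  · simpa using mul_le_of_le_one_left' hβ'
  · exact hslow a ha

variable [IsFiniteMeasure μ]

lemma Antitone.integrable_of_measure_Iio_zero {W : ℝ → ℝ} (hW : Antitone W) (hWm : Measurable W)
    (hW0 : 0 ≤ W) (hμ : μ (Iio 0) = 0) : Integrable W μ := by
  refine Integrable.of_bound hWm.aestronglyMeasurable (W 0) ?_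
  filter_upwards [ae_nonneg_of_measure_Iio_zero hμ] with c hc
  rw [Real.norm_of_nonneg (hW0 c)]
  exact hW hc

lemma mul_integral_le_integral_comp_div (hα : 0 < α) (hβ0 : 0 ≤ β) (hβ1 : β ≤ 1)
    (hμ : μ (Iio 0) = 0) (hslow : ∀ c > 0, ENNReal.ofReal β * μ (Iic c) ≤ μ (Iic (α * c)))
    {W : ℝ → ℝ} (hW : Antitone W) (hWc : Continuous W) (hW0 : 0 ≤ W) :
    β * ∫ c, W c ∂μ ≤ ∫ c, W (c / α) ∂μ := by
  have hWα : Antitone fun c => W (c / α) :=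
    hW.comp_monotone fun _ _ h => div_le_div_of_nonneg_right h hα.le
  refine mul_integral_le_integral_of_mul_meas_le hβ0 (Filter.Eventually.of_forall hW0)
    hWc.measurable.aemeasurable (Filter.Eventually.of_forall fun c => hW0 (c / α))
    (hWα.integrable_of_measure_Iio_zero (by fun_prop) (fun c => hW0 (c / α)) hμ) fun t _ => ?_
  exact measure_preimage_div_ge_of_isLowerSet hα hβ1 hμ hslow
    (isLowerSet_setOfPred.2 fun _ _ hab => le_trans' (hW hab)) (isClosed_le continuous_const hWc)

/-- The slowly-increasing approximation theorem for `(α, β, 0)`-slow increase and `η = 1`. -/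
theorem mul_integral_welfare_le_integral_linearContract_revenue {ι : Type*} [Fintype ι]
    [Nonempty ι] {R γ : ι → ℝ} {i₀ : ι} (hR₀ : R i₀ = 0) (hγ₀ : γ i₀ = 0) (hγ : 0 ≤ γ)
    (hα0 : 0 < α) (hα1 : α ≤ 1) (hβ0 : 0 ≤ β) (hβ1 : β ≤ 1) (hμ : μ (Iio 0) = 0)
    (hslow : ∀ c > 0, ENNReal.ofReal β * μ (Iic c) ≤ μ (Iic (α * c)))
    {i : ℝ → ι} (hi : ∀ c j, α * R j - γ j * c ≤ α * R (i c) - γ (i c) * c)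
    (hmeas : Measurable fun c => R (i c)) :
    (1 - α) * β * ∫ c, welfare R γ c ∂μ ≤ ∫ c, (1 - α) * R (i c) ∂μ := by
  have hW := antitone_welfare (R := R) hγ
  have hW0 := welfare_nonneg hR₀ hγ₀
  have hWα : Antitone fun c => welfare R γ (c / α) :=
    hW.comp_monotone fun _ _ h => div_le_div_of_nonneg_right h hα0.le
  have hRi : Integrable (fun c => R (i c)) μ :=
    Integrable.of_bound hmeas.aestronglyMeasurable (∑ j, |R j|) (Filter.Eventually.of_forall
      fun c => Finset.single_le_sum (f := fun j => |R j|) (fun _ _ => abs_nonneg _)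
        (Finset.mem_univ (i c)))
  calc (1 - α) * β * ∫ c, welfare R γ c ∂μ = (1 - α) * (β * ∫ c, welfare R γ c ∂μ) := by ring
    _ ≤ (1 - α) * ∫ c, welfare R γ (c / α) ∂μ :=
      mul_le_mul_of_nonneg_left
        (mul_integral_le_integral_comp_div hα0 hβ0 hβ1 hμ hslow hW continuous_welfare hW0)
        (by linarith)
    _ = ∫ c, (1 - α) * welfare R γ (c / α) ∂μ := (integral_const_mul _ _).symm
    _ ≤ ∫ c, (1 - α) * R (i c) ∂μ := by
      refine integral_mono_ae
        ((hWα.integrable_of_measure_Iio_zero (continuous_welfare.comp (by fun_prop)).measurable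
          (fun c => hW0 _) hμ).const_mul _) (hRi.const_mul _) ?_
      filter_upwards [ae_nonneg_of_measure_Iio_zero hμ] with c hc
      exact mul_le_mul_of_nonneg_left (welfare_div_le_of_isBestResponse hα0 hγ hc (hi c))
        (by linarith)

end SlowIncrease

noncomputable def smoothedPointMassCDF (ε c : ℝ) : ℝ :=
  (1 - ε) * (if 1 ≤ c then 1 else 0) + ε * min (c / 2) 1

/-- Tight at `c = 1`, where the atom at `1` is counted in the distribution function at `c` but not
at `c / 2`. -/
lemma mul_smoothedPointMassCDF_le_half {ε c : ℝ} (hε0 : 0 < ε) (hε1 : ε < 1) (hc : 0 < c) :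
    ε / (2 * (2 - ε)) * smoothedPointMassCDF ε c ≤ smoothedPointMassCDF ε (c / 2) := by
  rw [div_mul_eq_mul_div, div_le_iff₀ (by linarith)]
  unfold smoothedPointMassCDF
  rcases lt_or_ge c 1 with h1 | h1
  · rw [if_neg (by linarith), if_neg (by linarith), min_eq_left (by linarith),
      min_eq_left (by linarith)]
    nlinarith [mul_pos (mul_pos hε0 hε0) hc]
  rcases lt_or_ge c 2 with h2 | h2
  · rw [if_pos h1, if_neg (by linarith), min_eq_left (by linarith), min_eq_left (by linarith)]
    nlinarith [mul_nonneg (mul_nonneg hε0.le (by linarith : (0 : ℝ) ≤ c - 1))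
      (by linarith : (0 : ℝ) ≤ 1 - ε)]
  · have hm : 1 / 2 ≤ min (c / 2 / 2) 1 := le_min (by linarith) (by norm_num)
    rw [if_pos h1, if_pos (by linarith), min_eq_right (by linarith)]
    nlinarith [mul_le_mul_of_nonneg_left hm hε0.le]

lemma measurable_comp_of_measurable_val {α β : Type*} [MeasurableSpace α] [MeasurableSpace β]
    {n : ℕ} {F : Fin (n + 1) → β} {k : α → Fin (n + 1)} (hk : Measurable fun a => (k a : ℕ)) :
    Measurable fun a => F (k a) := by
  have hF : (fun a => F (k a)) = (fun m : ℕ => F (Fin.ofNat (n + 1) m)) ∘ fun a => (k a : ℕ) := by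
    funext a; simp
  rw [hF]
  exact measurable_from_nat.comp hk

/-- smoothed analysis: let `G` be the mixture that with probability
`1-ε` is a point mass at `1` and with probability `ε` is uniform on `[0,2]`. Then
`G(c/2) ≥ (ε/(2(2-ε)))·G(c)` for all `c > 0`, i.e. `G` is
`(1/2, ε/(2(2-ε)), 0)`-slowly-increasing; consequently, for any principal-agent
instance with type distribution `G`, the best linear contract achieves a
`4(2-ε)/ε`-approximation to the optimal welfare. -/
theorem smoothed_point_mass_linear_approx
    (ε : ℝ) (hε0 : 0 < ε) (hε1 : ε < 1)
    (G : ℝ → ℝ)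
    (hG : ∀ c : ℝ, 0 ≤ c →
      G c = (1 - ε) * (if 1 ≤ c then 1 else 0) + ε * min (c / 2) 1) :
    (∀ c : ℝ, 0 < c → ε / (2 * (2 - ε)) * G c ≤ G (c / 2)) ∧
      ∀ (n : ℕ) (γ R : Fin (n + 1) → ℝ),
        γ 0 = 0 → StrictMono γ → R 0 = 0 → StrictMono R →
        ∀ μ : Measure ℝ, IsProbabilityMeasure μ →
          μ (Set.Iio 0) = 0 →
          (∀ c : ℝ, 0 ≤ c → (μ (Set.Iic c)).toReal = G c) →
          ∀ istar : ℝ → ℝ → Fin (n + 1),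
            (∀ t c j, t * R j - γ j * c ≤ t * R (istar t c) - γ (istar t c) * c) →
            (∀ t, Measurable fun c => (istar t c : ℕ)) →
            ∃ α : ℝ, 0 < α ∧ α < 1 ∧
              (∫ c, (R (istar 1 c) - γ (istar 1 c) * c) ∂μ) ≤
                4 * (2 - ε) / ε * ∫ c, (1 - α) * R (istar α c) ∂μ := by
  have hslowG : ∀ c : ℝ, 0 < c → ε / (2 * (2 - ε)) * G c ≤ G (c / 2) := fun c hc => by
    rw [hG c hc.le, hG (c / 2) (by positivity)]
    exact mul_smoothedPointMassCDF_le_half hε0 hε1 hc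
  refine ⟨hslowG, fun n γ R hγ0 hγm hR0 _ μ hprob hneg hcdf istar hopt hmes => ?_⟩
  have h2ε : 0 < 2 - ε := by linarith
  have hβ0 : 0 ≤ ε / (2 * (2 - ε)) := by positivity
  have hβ1 : ε / (2 * (2 - ε)) ≤ 1 := by rw [div_le_one (by positivity)]; linarith
  have hμG : ∀ c, 0 ≤ c → μ (Iic c) = ENNReal.ofReal (G c) := fun c hc => by
    rw [← hcdf c hc, ENNReal.ofReal_toReal (measure_ne_top μ _)]
  have hslow : ∀ c > 0, ENNReal.ofReal (ε / (2 * (2 - ε))) * μ (Iic c) ≤ μ (Iic (1 / 2 * c)) :=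
    fun c hc => by
      rw [hμG c hc.le, hμG _ (by positivity), ← ENNReal.ofReal_mul hβ0, one_div_mul_eq_div]
      exact ENNReal.ofReal_le_ofReal (hslowG c hc)
  have hwelfare : ∀ c, R (istar 1 c) - γ (istar 1 c) * c = welfare R γ c := fun c =>
    (welfare_eq_of_forall_le (by simpa using hopt 1 c)).symm
  have hγ : 0 ≤ γ := fun j => by simpa [hγ0] using hγm.monotone (Fin.zero_le j)
  have key := mul_integral_welfare_le_integral_linearContract_revenue hR0 hγ0 hγ
    (by norm_num) (by norm_num) hβ0 hβ1 hneg hslow (hopt (1 / 2))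
    (measurable_comp_of_measurable_val (hmes _))
  refine ⟨1 / 2, by norm_num, by norm_num, ?_⟩
  simp_rw [hwelfare]
  calc ∫ c, welfare R γ c ∂μ
      = 4 * (2 - ε) / ε * ((1 - 1 / 2) * (ε / (2 * (2 - ε))) * ∫ c, welfare R γ c ∂μ) := by
        field_simp; ring
    _ ≤ _ := mul_le_mul_of_nonneg_left key (by positivity)
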